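/- Let s > t ≥ 1 be integers such that s − t is a perfect square and s − t > 4. Then for all sufficiently large even n there exists a simple graph G on n vertices with exactly ⌊n²/4⌋ + t edges and triangle covering number τ₃(G) ≥ s whose number of triangles satisfies N₃(G) = sn/2 − s·(s−t)^{1/2} < (s−1)⌊n/2⌋ + ⌈n/2⌉ − 2(s−t). In particular, the conjecture of Xiao and Katona that every n-vertex graph with ⌊n²/4⌋ + t edges and τ₃(G) ≥ s has at least (s−1)⌊n/2⌋ + ⌈n/2⌉ − 2(s−t) triangles is false. -/

import Mathlib

/-! For `n = 2m`, join a part `A` of `m + p` vertices completely to the remaining `m - p`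
vertices and add `s` disjoint edges inside `A`. This has `m² - p² + s = m² + t` edges. As `A`'s
complement is independent and the matching is triangle-free, every triangle is a matching edge
plus a vertex outside `A`, giving `s (m - p) = sn/2 - sp` triangles; a set of fewer than `s`
vertices misses some matching edge and some outside vertex, hence a triangle. The comparison
with the conjectured bound reduces to `2p < s`, true since `s ≥ p² ≥ 3p`. -/

open Finset SimpleGraph

/-- Number of `k`-cliques of a graph. -/
noncomputable def cliqueCount {V : Type*} (G : SimpleGraph V) (k : ℕ) : ℕ :=
  Nat.card {T : Finset V // G.IsNClique k T}

/-- `K_k`-covering number: minimum size of a vertex set meeting every `k`-clique. -/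
noncomputable def cliqueCover {V : Type*} [Fintype V] [DecidableEq V]
    (G : SimpleGraph V) (k : ℕ) : ℕ :=
  sInf {m | ∃ S : Finset V, S.card = m ∧ ∀ T : Finset V, G.IsNClique k T → ∃ v ∈ T, v ∈ S}

/-- Number of edges of a graph. -/
noncomputable def edgeCount {V : Type*} (G : SimpleGraph V) : ℕ := Nat.card G.edgeSet

/-- Number of edges of the Turán graph `T_r(n)`. -/
noncomputable def turanEdges (r n : ℕ) : ℕ := edgeCount (turanGraph n r)

/-- `e(n) = n² - 4⌊n²/4⌋`. -/
def eDef (n : ℕ) : ℕ := n ^ 2 - 4 * (n ^ 2 / 4)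

/-- `m_{s,t}(n)`: least `m` such that `4s - 4t - 4m + e(n)` is a perfect square. -/
noncomputable def mst (s t n : ℕ) : ℕ :=
  sInf {m : ℕ | ∃ p : ℕ, (p : ℤ) ^ 2 = 4 * s - 4 * t - 4 * m + eDef n}

/-- `R₃(n,s,t) = (4s - 4t - 4m_{s,t}(n) + e(n))^{1/2}`. -/
noncomputable def R3 (s t n : ℕ) : ℕ :=
  Nat.sqrt (4 * (s : ℤ) - 4 * t - 4 * mst s t n + eDef n).toNat

/-- Number of copies of `F` in `G`: subgraphs of `G` isomorphic to `F`. -/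
noncomputable def copyCount {α V : Type*} (F : SimpleGraph α) (G : SimpleGraph V) : ℕ :=
  Nat.card {H : G.Subgraph // Nonempty (F ≃g H.coe)}

/-- `F`-covering number of `G`. -/
noncomputable def coverNumber {α V : Type*} [Fintype V] [DecidableEq V]
    (F : SimpleGraph α) (G : SimpleGraph V) : ℕ :=
  sInf {m | ∃ S : Finset V, S.card = m ∧
    ∀ H : G.Subgraph, Nonempty (F ≃g H.coe) → ∃ v ∈ H.verts, v ∈ S}

/-- A graph `F` is `k`-critical. -/
def IsCritical {α : Type*} (k : ℕ) (F : SimpleGraph α) : Prop :=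
  F.chromaticNumber = k ∧ ∃ e ∈ F.edgeSet, (F.deleteEdges {e}).chromaticNumber < k

/-- `c(n,F)`: minimum number of copies of `F` after adding one new edge to `T_{k-1}(n)`. -/
noncomputable def cnF {α : Type*} (k n : ℕ) (F : SimpleGraph α) : ℕ :=
  sInf {c | ∃ u v : Fin n, u ≠ v ∧ ¬ (turanGraph n (k - 1)).Adj u v ∧
    c = copyCount F (turanGraph n (k - 1) ⊔ fromEdgeSet {s(u, v)})}

/-- `N_k(n,s)` from Theorem 1.3. -/
def NkBound (k s n : ℕ) : ℕ :=
  if n % (k - 1) = 0 then s * (n / (k - 1)) ^ (k - 3) * (n / (k - 1) - 1)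
  else if n % (k - 1) = 1 then s * (n / (k - 1)) ^ (k - 2) - (n / (k - 1)) ^ (k - 3)
  else s * (n / (k - 1) + 1) ^ (n % (k - 1) - 2) * (n / (k - 1)) ^ (k - n % (k - 1))

/-- `R_k(n,s,t)`. -/
noncomputable def Rk (k s t n : ℕ) : ℝ :=
  Real.sqrt ((2 * ((k : ℝ) - 1) * ((s : ℝ) - t) +
    ((k : ℝ) - 1 - (n % (k - 1) : ℕ)) * (n % (k - 1) : ℕ)) / ((k : ℝ) - 2))

/-- `c(x₁,…,x_{k-1},F)`: copies of `F` in the complete multipartite graph with parts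
`Fin (x i)` plus one edge inside part `0`. -/
noncomputable def cParts {α : Type*} (k : ℕ) (x : Fin (k - 1) → ℕ) (F : SimpleGraph α) : ℕ :=
  sInf {c | ∃ i₀ : Fin (k - 1), ∃ a b : Fin (x i₀), (i₀ : ℕ) = 0 ∧ a ≠ b ∧
    c = copyCount F (completeMultipartiteGraph (fun i => Fin (x i)) ⊔
      fromEdgeSet {s(⟨i₀, a⟩, ⟨i₀, b⟩)})}

lemma edgeCount_eq_card_edgeFinset {V : Type*} (G : SimpleGraph V) [Fintype G.edgeSet] :
    edgeCount G = #G.edgeFinset := by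
  rw [edgeCount, Nat.card_eq_fintype_card, edgeFinset_card]

variable {V : Type*} [Fintype V]

lemma cliqueCount_eq_card_cliqueFinset [DecidableEq V] (G : SimpleGraph V) [DecidableRel G.Adj]
    (k : ℕ) : cliqueCount G k = #(G.cliqueFinset k) := by
  rw [cliqueCount, Nat.card_eq_fintype_card, Fintype.card_subtype, cliqueFinset]

lemma le_cliqueCover [DecidableEq V] {G : SimpleGraph V} {k r : ℕ} (hk : k ≠ 0)
    (h : ∀ S : Finset V, #S < r → ∃ T, G.IsNClique k T ∧ Disjoint T S) :
    r ≤ cliqueCover G k := by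
  refine le_csInf ⟨_, univ, rfl, fun T hT => ?_⟩ ?_
  · obtain ⟨v, hv⟩ := card_pos.1 (hT.card_eq ▸ Nat.pos_of_ne_zero hk)
    exact ⟨v, hv, mem_univ v⟩
  · rintro _ ⟨S, rfl, hS⟩
    by_contra! hlt
    obtain ⟨T, hT, hTS⟩ := h S hlt
    obtain ⟨v, hvT, hvS⟩ := hS T hT
    exact disjoint_left.1 hTS hvT hvS

section MaxDegreeOne

variable [DecidableEq V] {M : SimpleGraph V} [DecidableRel M.Adj]

lemma cliqueFree_three_of_degree_le_one (hM : ∀ v, M.degree v ≤ 1) : M.CliqueFree 3 := by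
  intro T hT
  obtain ⟨a, b, c, hab, hac, hbc, rfl⟩ := is3Clique_iff.1 hT
  have : #({b, c} : Finset V) ≤ M.degree a := by
    rw [← card_neighborFinset_eq_degree]
    exact card_le_card (by simp [insert_subset_iff, hab, hac])
  rw [card_pair hbc.ne] at this
  exact absurd (hM a) (by omega)

/-- Each vertex of `S` lies on at most one edge of `M`. -/
lemma exists_adj_notMem_of_card_lt (hM : ∀ v, M.degree v ≤ 1) {S : Finset V}
    (hS : #S < #M.edgeFinset) : ∃ u w, M.Adj u w ∧ u ∉ S ∧ w ∉ S := by
  have hlt : #(S.biUnion fun v => M.incidenceFinset v) < #M.edgeFinset := calc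
    _ ≤ ∑ v ∈ S, #(M.incidenceFinset v) := card_biUnion_le
    _ ≤ ∑ _v ∈ S, 1 :=
      sum_le_sum fun v _ => (card_incidenceFinset_eq_degree M v).trans_le (hM v)
    _ < _ := by simpa using hS
  obtain ⟨e, he, heS⟩ := exists_mem_notMem_of_card_lt_card hlt
  induction e with
  | h u w =>
    have hnot : ∀ x ∈ S, x ∉ s(u, w) := fun x hx hxe =>
      heS (mem_biUnion.2 ⟨x, hx, (mem_incidenceFinset ..).2 ⟨mem_edgeFinset.1 he, hxe⟩⟩)
    exact ⟨u, w, mem_edgeFinset.1 he, fun hu => hnot u hu (Sym2.mem_mk_left u w),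
      fun hw => hnot w hw (Sym2.mem_mk_right u w)⟩

end MaxDegreeOne

section CompleteCut

variable [DecidableEq V] (A : Finset V)

abbrev completeCut : SimpleGraph V := (⊤ : SimpleGraph V).between A ↑Aᶜ

lemma completeCut_adj {u v : V} : (completeCut A).Adj u v ↔ (u ∈ A ↔ v ∉ A) := by
  simp only [between_adj, top_adj, coe_compl, Set.mem_compl_iff, mem_coe]
  constructor
  · tauto
  · intro h
    refine ⟨fun huv => ?_, by tauto⟩
    subst huv
    tauto

lemma card_edgeFinset_completeCut : #(completeCut A).edgeFinset = #A * #Aᶜ := by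
  have hdeg : ∀ v, (completeCut A).degree v = if v ∈ A then #Aᶜ else #A := by
    intro v
    rw [← card_neighborFinset_eq_degree]
    split_ifs with hv <;> congr 1 <;> ext w <;> simp [completeCut_adj, hv]
  have := sum_degrees_eq_twice_card_edges (completeCut A)
  rw [← sum_add_sum_compl A, sum_congr rfl fun v hv => (hdeg v).trans (if_pos hv),
    sum_congr rfl fun v hv => (hdeg v).trans (if_neg (mem_compl.1 hv))] at this
  simp only [sum_const, smul_eq_mul] at this
  linarith

variable {A} {M : SimpleGraph V} (hMA : ∀ ⦃u v⦄, M.Adj u v → u ∈ A)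
include hMA

lemma isNClique_three_completeCut_sup_iff (hM3 : M.CliqueFree 3) {T : Finset V} :
    (completeCut A ⊔ M).IsNClique 3 T ↔ ∃ b ∉ A, ∃ u w, M.Adj u w ∧ T = {b, u, w} := by
  have adj_iff (u v) : (completeCut A ⊔ M).Adj u v ↔ (u ∈ A ↔ v ∉ A) ∨ M.Adj u v := by
    simp only [sup_adj, completeCut_adj]
  have hout : ∀ ⦃u v⦄, (completeCut A ⊔ M).Adj u v → u ∉ A → v ∈ A := by
    intro u v huv hu
    rcases (adj_iff u v).1 huv with h | h
    · tauto
    · exact absurd (hMA h) hu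
  have hin : ∀ ⦃u v⦄, (completeCut A ⊔ M).Adj u v → u ∈ A → v ∈ A → M.Adj u v :=
    fun u v huv hu hv => ((adj_iff u v).1 huv).resolve_left (by tauto)
  constructor
  · intro hT
    obtain ⟨a, b, c, hab, hac, hbc, rfl⟩ := is3Clique_iff.1 hT
    by_cases ha : a ∈ A
    · by_cases hb : b ∈ A
      · have hc : c ∉ A := fun hc => hM3 _ (is3Clique_triple_iff.2
          ⟨hin hab ha hb, hin hac ha hc, hin hbc hb hc⟩)
        exact ⟨c, hc, a, b, hin hab ha hb, by ext; simp only [mem_insert, mem_singleton]; tauto⟩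
      · exact ⟨b, hb, a, c, hin hac ha (hout hbc hb), insert_comm ..⟩
    · exact ⟨a, ha, b, c, hin hbc (hout hab ha) (hout hac ha), rfl⟩
  · rintro ⟨b, hb, u, w, huw, rfl⟩
    rw [is3Clique_triple_iff, adj_iff, adj_iff, adj_iff]
    have := hMA huw
    have := hMA huw.symm
    tauto

variable [DecidableRel M.Adj]

lemma card_edgeFinset_completeCut_sup :
    #(completeCut A ⊔ M).edgeFinset = #A * #Aᶜ + #M.edgeFinset := by
  rw [edgeFinset_sup, card_union_of_disjoint, card_edgeFinset_completeCut]
  rw [disjoint_edgeFinset, disjoint_iff_inf_le]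
  intro u v ⟨huv, hM⟩
  exact ((completeCut_adj A).1 huv).1 (hMA hM) (hMA hM.symm)

lemma card_cliqueFinset_three_completeCut_sup (hM3 : M.CliqueFree 3) :
    #((completeCut A ⊔ M).cliqueFinset 3) = #Aᶜ * #M.edgeFinset := by
  have hmem : ∀ e ∈ M.edgeFinset, ∀ x ∈ e, x ∈ A := by
    intro e he
    induction e with
    | h u w =>
      intro x hx
      rw [mem_edgeFinset, mem_edgeSet] at he
      rcases Sym2.mem_iff.1 hx with rfl | rfl
      exacts [hMA he, hMA he.symm]
  have himage : (completeCut A ⊔ M).cliqueFinset 3 =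
      (Aᶜ ×ˢ M.edgeFinset).image fun x => insert x.1 x.2.toFinset := by
    ext T
    simp only [mem_cliqueFinset_iff, isNClique_three_completeCut_sup_iff hMA hM3, mem_image,
      mem_product, Prod.exists, mem_compl]
    constructor
    · rintro ⟨b, hb, u, w, huw, rfl⟩
      exact ⟨b, s(u, w), ⟨hb, mem_edgeFinset.2 huw⟩, by rw [Sym2.toFinset_mk_eq]⟩
    · rintro ⟨b, e, ⟨hb, he⟩, rfl⟩
      induction e with
      | h u w => exact ⟨b, hb, u, w, mem_edgeFinset.1 he, by rw [Sym2.toFinset_mk_eq]⟩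
  rw [himage, card_image_of_injOn, card_product]
  rintro ⟨b, e⟩ h ⟨b', e'⟩ h' heq
  simp only [coe_product, Set.mem_prod, mem_coe, mem_compl] at h h' heq
  have hb : b ∉ e.toFinset := fun hbe => h.1 (hmem e h.2 b (Sym2.mem_toFinset.1 hbe))
  have hb' : b' ∉ e'.toFinset := fun hbe => h'.1 (hmem e' h'.2 b' (Sym2.mem_toFinset.1 hbe))
  obtain rfl : b = b' := by
    have : b ∈ insert b' e'.toFinset := heq ▸ mem_insert_self b _
    exact (mem_insert.1 this).resolve_right fun hbe =>
      h.1 (hmem e' h'.2 b (Sym2.mem_toFinset.1 hbe))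
  have : e.toFinset = e'.toFinset := by rw [← erase_insert hb, heq, erase_insert hb']
  simp only [Prod.mk.injEq, true_and]
  exact Sym2.ext fun x => by rw [← Sym2.mem_toFinset, this, Sym2.mem_toFinset]

lemma card_edgeFinset_le_cliqueCover (hM : ∀ v, M.degree v ≤ 1)
    (hcard : #M.edgeFinset ≤ #Aᶜ) : #M.edgeFinset ≤ cliqueCover (completeCut A ⊔ M) 3 := by
  refine le_cliqueCover three_ne_zero fun S hS => ?_
  obtain ⟨u, w, huw, hu, hw⟩ := exists_adj_notMem_of_card_lt hM hS
  obtain ⟨b, hb, hbS⟩ := exists_mem_notMem_of_card_lt_card (hS.trans_le hcard)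
  refine ⟨{b, u, w}, (isNClique_three_completeCut_sup_iff hMA
    (cliqueFree_three_of_degree_le_one hM)).2 ⟨b, mem_compl.1 hb, u, w, huw, rfl⟩, ?_⟩
  simp only [disjoint_insert_left, disjoint_singleton_left]
  exact ⟨hbS, hu, hw⟩

end CompleteCut

/-- The matching with edges `{2i, 2i+1}` for `i < s`. -/
def pairMatching (n s : ℕ) : SimpleGraph (Fin n) where
  Adj u v := u ≠ v ∧ (u : ℕ) / 2 = (v : ℕ) / 2 ∧ (u : ℕ) < 2 * s
  symm := ⟨fun _ _ ⟨huv, hdiv, hu⟩ => ⟨huv.symm, hdiv.symm, by omega⟩⟩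
  loopless := ⟨fun _ h => h.1 rfl⟩

instance (n s : ℕ) : DecidableRel (pairMatching n s).Adj :=
  fun _ _ => inferInstanceAs (Decidable (_ ∧ _))

namespace pairMatching

variable {n s : ℕ}

lemma degree_le_one (v : Fin n) : (pairMatching n s).degree v ≤ 1 := by
  rw [← card_neighborFinset_eq_degree, card_le_one]
  simp only [mem_neighborFinset]
  rintro a ⟨hva, hdiva, -⟩ b ⟨hvb, hdivb, -⟩
  rw [Ne, Fin.ext_iff] at hva hvb
  exact Fin.ext (by omega)

lemma degree_eq (h : 2 * s ≤ n) (v : Fin n) :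
    (pairMatching n s).degree v = if (v : ℕ) < 2 * s then 1 else 0 := by
  split_ifs with hv
  · refine le_antisymm (degree_le_one v) (Nat.one_le_iff_ne_zero.2 fun h0 => ?_)
    -- the partner of `v` is `v xor 1`
    have hadj : (pairMatching n s).Adj v ⟨4 * ((v : ℕ) / 2) + 1 - v, by omega⟩ :=
      ⟨Fin.ne_of_val_ne (show (v : ℕ) ≠ 4 * ((v : ℕ) / 2) + 1 - v by omega),
        show (v : ℕ) / 2 = (4 * ((v : ℕ) / 2) + 1 - v) / 2 by omega, hv⟩
    rw [← card_neighborFinset_eq_degree, card_eq_zero] at h0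
    exact notMem_empty _ (h0 ▸ (mem_neighborFinset _ _ _).2 hadj)
  · rw [← card_neighborFinset_eq_degree, card_eq_zero, eq_empty_iff_forall_notMem]
    intro w hw
    exact hv ((mem_neighborFinset _ _ _).1 hw).2.2

lemma card_edgeFinset (h : 2 * s ≤ n) : #(pairMatching n s).edgeFinset = s := by
  have := sum_degrees_eq_twice_card_edges (pairMatching n s)
  simp only [degree_eq h, sum_boole, Nat.cast_id, Fin.card_filter_val_lt] at this
  omega

end pairMatching

abbrev cutMatchingGraph (n a s : ℕ) : SimpleGraph (Fin n) :=
  completeCut {v : Fin n | (v : ℕ) < a} ⊔ pairMatching n s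

section CutMatchingGraph

variable {n a s : ℕ}

lemma card_compl_filter_val_lt : #({v : Fin n | (v : ℕ) < a} : Finset (Fin n))ᶜ = n - a := by
  rw [card_compl, Fintype.card_fin, Fin.card_filter_val_lt]
  omega

lemma pairMatching_adj_mem (hs : 2 * s ≤ a) :
    ∀ ⦃u v : Fin n⦄, (pairMatching n s).Adj u v →
      u ∈ ({w : Fin n | (w : ℕ) < a} : Finset _) :=
  fun _ _ huv => mem_filter.2 ⟨mem_univ _, huv.2.2.trans_le hs⟩

lemma edgeCount_cutMatchingGraph (ha : a ≤ n) (hs : 2 * s ≤ a) :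
    edgeCount (cutMatchingGraph n a s) = a * (n - a) + s := by
  rw [edgeCount_eq_card_edgeFinset, card_edgeFinset_completeCut_sup (pairMatching_adj_mem hs),
    card_compl_filter_val_lt, Fin.card_filter_val_lt, pairMatching.card_edgeFinset (by omega),
    min_eq_right ha]

lemma cliqueCount_cutMatchingGraph (ha : a ≤ n) (hs : 2 * s ≤ a) :
    cliqueCount (cutMatchingGraph n a s) 3 = (n - a) * s := by
  rw [cliqueCount_eq_card_cliqueFinset, card_cliqueFinset_three_completeCut_sup
    (pairMatching_adj_mem hs) (cliqueFree_three_of_degree_le_one pairMatching.degree_le_one),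
    card_compl_filter_val_lt, pairMatching.card_edgeFinset (by omega)]

lemma le_cliqueCover_cutMatchingGraph (hs : 2 * s ≤ a) (hsa : s ≤ n - a) :
    s ≤ cliqueCover (cutMatchingGraph n a s) 3 := by
  have hM := pairMatching.card_edgeFinset (n := n) (s := s) (by omega)
  refine hM.symm.trans_le (card_edgeFinset_le_cliqueCover (pairMatching_adj_mem hs)
    pairMatching.degree_le_one ?_)
  rwa [hM, card_compl_filter_val_lt]

end CutMatchingGraph

theorem stmt_2_general (s t p : ℕ) (hp : s - t = p ^ 2)
    (h4 : 4 < s - t) :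
    ∃ n₀ : ℕ, ∀ n ≥ n₀, Even n →
      ∃ G : SimpleGraph (Fin n),
        edgeCount G = n ^ 2 / 4 + t ∧ s ≤ cliqueCover G 3 ∧
        (cliqueCount G 3 : ℚ) = (s : ℚ) * n / 2 - s * p ∧
        (cliqueCount G 3 : ℚ) <
          ((s : ℚ) - 1) * (n / 2 : ℕ) + ((n + 1) / 2 : ℕ) - 2 * ((s : ℚ) - t) := by
  have hp2 : 2 < p := lt_of_pow_lt_pow_left₀ 2 p.zero_le (by omega)
  have hs : s = p ^ 2 + t := by omega
  have hps : 3 * p ≤ s := by nlinarith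
  refine ⟨4 * s, fun n hn ⟨m, hm⟩ => ⟨cutMatchingGraph n (m + p) s, ?_,
    le_cliqueCover_cutMatchingGraph (by omega) (by omega), ?_, ?_⟩⟩
  · rw [edgeCount_cutMatchingGraph (by omega) (by omega), show n - (m + p) = m - p by omega,
      show n ^ 2 / 4 = m ^ 2 by rw [hm, ← two_mul, mul_pow]; norm_num, hs]
    zify [show p ≤ m by omega]
    ring
  · rw [cliqueCount_cutMatchingGraph (by omega) (by omega), show n - (m + p) = m - p by omega, hm]
    push_cast [Nat.cast_sub (show p ≤ m by omega)]
    ring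
  · have hst : (s : ℚ) - t = p ^ 2 := by rw [hs]; push_cast; ring
    have hsp : (2 * p ^ 2 : ℚ) < p * s := by exact_mod_cast (show 2 * p ^ 2 < p * s by nlinarith)
    rw [cliqueCount_cutMatchingGraph (by omega) (by omega), show n - (m + p) = m - p by omega,
      show n / 2 = m by omega, show (n + 1) / 2 = m by omega, hst]
    push_cast [Nat.cast_sub (show p ≤ m by omega)]
    linarith

/-- counterexample to the conjecture of Xiao and Katona, when `s - t` is a
perfect square greater than `4` and `n` is large and even. -/
theorem stmt_2 (s t p : ℕ) (ht : 1 ≤ t) (hts : t < s) (hp : s - t = p ^ 2)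
    (h4 : 4 < s - t) :
    ∃ n₀ : ℕ, ∀ n ≥ n₀, Even n →
      ∃ G : SimpleGraph (Fin n),
        edgeCount G = n ^ 2 / 4 + t ∧ s ≤ cliqueCover G 3 ∧
        (cliqueCount G 3 : ℚ) = (s : ℚ) * n / 2 - s * p ∧
        (cliqueCount G 3 : ℚ) <
          ((s : ℚ) - 1) * (n / 2 : ℕ) + ((n + 1) / 2 : ℕ) - 2 * ((s : ℚ) - t) :=
  stmt_2_general s t p hp h4
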